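/- Let α = 1, Σ_ω = 0, Σ_ν symmetric positive definite, C_0 symmetric positive definite, and consider the recursion C_{n+1}⁻¹ = GᵀΣ_ν⁻¹G + C_n⁻¹, C_{n+1}⁻¹ m_{n+1} = GᵀΣ_ν⁻¹y + C_n⁻¹ m_n. Define G' = G C_0^{1/2}, S = (G')ᵀΣ_ν⁻¹G', m'_n = C_0^{-1/2} m_n, let Q be the orthogonal projection onto the nullspace of S and P = I − Q. Then: (i) Q m'_n = Q m'_0 for all n; (ii) there exists a unique m_* in the orthogonal complement of the nullspace of S with S m_* = (G')ᵀΣ_ν⁻¹y, and there exists K > 0 such that ‖P m'_n − m_*‖ ≤ K/n for all n ≥ 1; (iii) (C'_n)⁻¹ = I + nS where C'_n = C_0^{-1/2} C_n C_0^{-1/2}, so in particular Q(C'_n)⁻¹ = Q for all n. -/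

import Mathlib

open Matrix

/-- The square root of a positive semidefinite matrix, as defined in the older Mathlib
(removed since). -/
noncomputable def Matrix.PosSemidef.sqrt {n : Type*} [Fintype n] [DecidableEq n]
    {A : Matrix n n ℝ} (hA : A.PosSemidef) : Matrix n n ℝ :=
  (hA.1.eigenvectorUnitary : Matrix n n ℝ) * diagonal (Real.sqrt ∘ hA.1.eigenvalues) *
    (star hA.1.eigenvectorUnitary : Matrix n n ℝ)

/-!
Conjugating by `R = C₀^{1/2}` whitens the iteration: unrolling the recursions gives
`C_n⁻¹ = n Gᵀ Σ_ν⁻¹ G + C₀⁻¹` and `C_n⁻¹ m_n = n Gᵀ Σ_ν⁻¹ y + C₀⁻¹ m₀`, i.e.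
`(C'_n)⁻¹ = I + n S` and `(I + n S) m'_n = n c + m'_0` with `c = G'ᵀ Σ_ν⁻¹ y`.
Since `c` lies in the range of `G'ᵀ`, which is orthogonal to `ker S = ker G'`, the projection `Q`
kills both `S` and `c`, giving (i) and (iii). For symmetric `S` the range is `(ker S)ᗮ`, so
`S m_* = c` has a unique solution `m_* ⊥ ker S`, and `z_n = P m'_n - m_*` satisfies
`(I + n S) z_n = S u` for a fixed `u`. As `I + n S` does not shrink norms, applying it to
`u - n z_n` (which it maps to `u`) gives `n ‖z_n‖ ≤ 2 ‖u‖`.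
-/

lemma eq_nsmul_add_of_forall_succ {M : Type*} [AddCommMonoid M] {a : ℕ → M} {b : M}
    (h : ∀ n, a (n + 1) = b + a n) (n : ℕ) : a n = n • b + a 0 := by
  induction n with
  | zero => simp
  | succ n ih => rw [h, ih, succ_nsmul', add_assoc]

namespace Matrix

variable {ι : Type*} [Fintype ι]

namespace PosSemidef

lemma transpose_mul_mul_same {κ : Type*} [Fintype κ] {W : Matrix κ κ ℝ} (hW : W.PosSemidef)
    (B : Matrix κ ι ℝ) : (Bᵀ * W * B).PosSemidef := by
  simpa [conjTranspose_eq_transpose_of_trivial] using hW.conjTranspose_mul_mul_same B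

variable [DecidableEq ι] {A : Matrix ι ι ℝ}

lemma sqrt_mul_self (hA : A.PosSemidef) : hA.sqrt * hA.sqrt = A := by
  have hsqrt : hA.sqrt = Unitary.conjStarAlgAut ℝ _ hA.1.eigenvectorUnitary
      (diagonal (Real.sqrt ∘ hA.1.eigenvalues)) := rfl
  conv_rhs => rw [hA.1.spectral_theorem]
  rw [hsqrt, ← map_mul, diagonal_mul_diagonal]
  congr 2
  funext i
  simpa using Real.mul_self_sqrt (hA.eigenvalues_nonneg i)

lemma transpose_sqrt (hA : A.PosSemidef) : hA.sqrtᵀ = hA.sqrt := by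
  rw [← conjTranspose_eq_transpose_of_trivial]
  simp [Matrix.PosSemidef.sqrt, Matrix.mul_assoc, Matrix.star_eq_conjTranspose]

end PosSemidef

lemma PosDef.isUnit_det_sqrt [DecidableEq ι] {A : Matrix ι ι ℝ} (hA : A.PosDef) :
    IsUnit hA.posSemidef.sqrt.det := by
  have h : IsUnit (hA.posSemidef.sqrt.det * hA.posSemidef.sqrt.det) := by
    rw [← det_mul, hA.posSemidef.sqrt_mul_self]
    exact hA.det_pos.ne'.isUnit
  exact isUnit_of_mul_isUnit_left h

lemma mulVec_eq_zero_of_transpose_mul_mul_mulVec_eq_zero {κ : Type*} [Fintype κ]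
    {W : Matrix κ κ ℝ} (hW : W.PosDef) {B : Matrix κ ι ℝ} {v : ι → ℝ}
    (hv : (Bᵀ * W * B) *ᵥ v = 0) : B *ᵥ v = 0 := by
  by_contra hBv
  have hquad : (B *ᵥ v) ⬝ᵥ (W *ᵥ (B *ᵥ v)) = v ⬝ᵥ ((Bᵀ * W * B) *ᵥ v) := by
    rw [← mulVec_mulVec, ← mulVec_mulVec, dotProduct_mulVec v Bᵀ, vecMul_transpose]
  have hpos := hW.dotProduct_mulVec_pos hBv
  rw [star_trivial, hquad, hv, dotProduct_zero] at hpos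
  exact lt_irrefl 0 hpos

lemma norm_toLp_le_norm_toLp_add_mulVec {T : Matrix ι ι ℝ} (hT : T.PosSemidef) (w : ι → ℝ) :
    ‖WithLp.toLp 2 w‖ ≤ ‖WithLp.toLp 2 (w + T *ᵥ w)‖ := by
  have hinner : 0 ≤ inner ℝ (WithLp.toLp 2 w) (WithLp.toLp 2 (T *ᵥ w)) := by
    simpa [EuclideanSpace.inner_toLp_toLp, dotProduct_comm] using hT.dotProduct_mulVec_nonneg w
  have hsq := norm_add_sq_real (WithLp.toLp 2 w) (WithLp.toLp 2 (T *ᵥ w))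
  rw [← WithLp.toLp_add] at hsq
  nlinarith [norm_nonneg (WithLp.toLp 2 w), norm_nonneg (WithLp.toLp 2 (w + T *ᵥ w)),
    sq_nonneg ‖WithLp.toLp 2 (T *ᵥ w)‖]

lemma mul_norm_toLp_le_of_one_add_smul_mulVec_eq [DecidableEq ι] {S : Matrix ι ι ℝ}
    (hS : S.PosSemidef) {t : ℝ} (ht : 0 ≤ t) {z u : ι → ℝ} (h : (1 + t • S) *ᵥ z = S *ᵥ u) :
    t * ‖WithLp.toLp 2 z‖ ≤ 2 * ‖WithLp.toLp 2 u‖ := by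
  rw [add_mulVec, one_mulVec, smul_mulVec] at h
  have hw : (u - t • z) + (t • S) *ᵥ (u - t • z) = u := by
    rw [smul_mulVec, mulVec_sub, mulVec_smul, ← h]
    module
  have hwu := norm_toLp_le_norm_toLp_add_mulVec (hS.smul ht) (u - t • z)
  rw [hw] at hwu
  calc t * ‖WithLp.toLp 2 z‖ = ‖WithLp.toLp 2 u - WithLp.toLp 2 (u - t • z)‖ := by
        rw [← WithLp.toLp_sub, sub_sub_cancel, WithLp.toLp_smul, norm_smul,
          Real.norm_of_nonneg ht]
    _ ≤ ‖WithLp.toLp 2 u‖ + ‖WithLp.toLp 2 (u - t • z)‖ := norm_sub_le _ _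
    _ ≤ 2 * ‖WithLp.toLp 2 u‖ := by linarith

lemma mulVec_eq_of_one_add_smul_mulVec_eq [DecidableEq ι] {S Q : Matrix ι ι ℝ}
    (hQS : Q * S = 0) {c : ι → ℝ} (hc : Q *ᵥ c = 0) {x : ℕ → ι → ℝ}
    (hx : ∀ n : ℕ, (1 + (n : ℝ) • S) *ᵥ x n = (n : ℝ) • c + x 0) (n : ℕ) :
    Q *ᵥ x n = Q *ᵥ x 0 := by
  have h := congrArg (Q *ᵥ ·) (hx n)
  simpa [mulVec_mulVec, mul_add, hQS, mulVec_add, mulVec_smul, hc] using h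

section KernelProjection

variable {S Q : Matrix ι ι ℝ} (hker : ∀ v, S *ᵥ v = 0 ↔ Q *ᵥ v = v)
include hker

lemma mul_eq_zero_of_ker_iff (hQQ : Q * Q = Q) : S * Q = 0 :=
  ext_iff_mulVec.mpr fun v => by
    rw [← mulVec_mulVec, (hker _).mpr (by rw [mulVec_mulVec, hQQ]), zero_mulVec]

lemma mul_eq_zero_of_ker_iff' (hS : S.IsHermitian) (hQ : Qᵀ = Q) (hQQ : Q * Q = Q) :
    Q * S = 0 := by
  rw [← (isHermitian_iff_isSymm.mp hS).eq, ← hQ, ← transpose_mul, mul_eq_zero_of_ker_iff hker hQQ,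
    transpose_zero]

lemma mul_transpose_eq_zero_of_ker_iff {κ : Type*} [Fintype κ] {W : Matrix κ κ ℝ}
    (hW : W.PosDef) {B : Matrix κ ι ℝ} (hSB : S = Bᵀ * W * B) (hQ : Qᵀ = Q) (hQQ : Q * Q = Q) :
    Q * Bᵀ = 0 := by
  have hBQ : B * Q = 0 := ext_iff_mulVec.mpr fun v => by
    rw [zero_mulVec, ← mulVec_mulVec]
    refine mulVec_eq_zero_of_transpose_mul_mul_mulVec_eq_zero hW ?_
    rw [← hSB, mulVec_mulVec, mul_eq_zero_of_ker_iff hker hQQ, zero_mulVec]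
  rw [← hQ, ← transpose_mul, hBQ, transpose_zero]

lemma eq_of_mulVec_eq_of_ker_iff {a b : ι → ℝ} (ha : Q *ᵥ a = 0) (hb : Q *ᵥ b = 0)
    (hab : S *ᵥ a = S *ᵥ b) : a = b := by
  have hfix := (hker (a - b)).mp (by rw [mulVec_sub, hab, sub_self])
  rw [mulVec_sub, ha, hb, sub_self] at hfix
  exact sub_eq_zero.mp hfix.symm

variable [DecidableEq ι]

lemma exists_mulVec_eq_of_ker_iff (hS : S.IsHermitian) (hQ : Qᵀ = Q) (hQQ : Q * Q = Q)
    {r : ι → ℝ} (hr : Q *ᵥ r = 0) : ∃ u, Q *ᵥ u = 0 ∧ S *ᵥ u = r := by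
  suffices WithLp.toLp 2 r ∈ LinearMap.range S.toEuclideanLin by
    obtain ⟨u, hu⟩ := this
    refine ⟨u - Q *ᵥ u, ?_, ?_⟩
    · rw [mulVec_sub, mulVec_mulVec, hQQ, sub_self]
    · rw [mulVec_sub, mulVec_mulVec, mul_eq_zero_of_ker_iff hker hQQ, zero_mulVec, sub_zero]
      exact congrArg WithLp.ofLp hu
  rw [← Submodule.orthogonal_orthogonal (LinearMap.range _),
    (isSymmetric_toEuclideanLin_iff.mpr hS).orthogonal_range]
  intro w hw
  have hQw : Q *ᵥ WithLp.ofLp w = WithLp.ofLp w := (hker _).mp (congrArg WithLp.ofLp hw)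
  rw [EuclideanSpace.inner_eq_star_dotProduct, star_trivial, ← hQw, dotProduct_mulVec, ← hQ,
    vecMul_transpose, WithLp.ofLp_toLp, hr, zero_dotProduct]

lemma exists_norm_sub_le_div_of_one_add_smul_mulVec_eq (hS : S.PosSemidef) (hQ : Qᵀ = Q)
    (hQQ : Q * Q = Q) {c : ι → ℝ} (hc : Q *ᵥ c = 0) {x : ℕ → ι → ℝ}
    (hx : ∀ n : ℕ, (1 + (n : ℝ) • S) *ᵥ x n = (n : ℝ) • c + x 0) {xstar : ι → ℝ}
    (hQstar : Q *ᵥ xstar = 0) (hSstar : S *ᵥ xstar = c) :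
    ∃ K > (0 : ℝ), ∀ n : ℕ, 1 ≤ n → ‖WithLp.toLp 2 ((1 - Q) *ᵥ x n - xstar)‖ ≤ K / n := by
  have hSQ := mul_eq_zero_of_ker_iff hker hQQ
  have hQS := mul_eq_zero_of_ker_iff' hker hS.1 hQ hQQ
  obtain ⟨u, -, hu⟩ := exists_mulVec_eq_of_ker_iff hker hS.1 hQ hQQ
    (r := (1 - Q) *ᵥ x 0 - xstar) (by
      rw [mulVec_sub, mulVec_mulVec, mul_sub, mul_one, hQQ, sub_self, zero_mulVec, hQstar,
        sub_zero])
  refine ⟨2 * ‖WithLp.toLp 2 u‖ + 1, by positivity, fun n hn => ?_⟩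
  have hcomm : (1 + (n : ℝ) • S) * (1 - Q) = (1 - Q) * (1 + (n : ℝ) • S) := by
    simp only [mul_sub, sub_mul, mul_add, add_mul, mul_one, one_mul, smul_mul_assoc, hSQ,
      mul_smul_comm, hQS, smul_zero, add_zero, sub_zero]
    abel
  have hz : (1 + (n : ℝ) • S) *ᵥ ((1 - Q) *ᵥ x n - xstar) = S *ᵥ u := by
    rw [hu, mulVec_sub, mulVec_mulVec, hcomm, ← mulVec_mulVec, hx n, add_mulVec, one_mulVec,
      smul_mulVec, hSstar, mulVec_add, mulVec_smul, sub_mulVec, one_mulVec, hc, sub_zero]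
    abel
  have hnpos : (0 : ℝ) < n := by exact_mod_cast hn
  rw [le_div_iff₀ hnpos]
  nlinarith [mul_norm_toLp_le_of_one_add_smul_mulVec_eq hS hnpos.le hz]

end KernelProjection

section KalmanIteration

variable [DecidableEq ι] {A : Matrix ι ι ℝ} {C : ℕ → Matrix ι ι ℝ}

lemma posDef_of_forall_succ_eq_inv_add_inv (hA : A.PosSemidef) (hC0 : (C 0).PosDef)
    (hC : ∀ n, C (n + 1) = (A + (C n)⁻¹)⁻¹) (n : ℕ) : (C n).PosDef := by
  induction n with
  | zero => exact hC0
  | succ n ih => rw [hC]; exact (PosDef.posSemidef_add hA ih.inv).inv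

lemma inv_eq_smul_add_inv_zero (hA : A.PosSemidef) (hC0 : (C 0).PosDef)
    (hC : ∀ n, C (n + 1) = (A + (C n)⁻¹)⁻¹) (n : ℕ) : (C n)⁻¹ = (n : ℝ) • A + (C 0)⁻¹ := by
  refine Nat.cast_smul_eq_nsmul ℝ n A ▸
    eq_nsmul_add_of_forall_succ (a := fun n => (C n)⁻¹) (fun k => ?_) n
  have hpos := PosDef.posSemidef_add hA (posDef_of_forall_succ_eq_inv_add_inv hA hC0 hC k).inv
  rw [hC, nonsing_inv_nonsing_inv _ ((isUnit_iff_isUnit_det _).mp hpos.isUnit)]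

lemma inv_mulVec_eq_smul_add_inv_zero_mulVec {b : ι → ℝ} {m : ℕ → ι → ℝ}
    (hm : ∀ n, (C (n + 1))⁻¹ *ᵥ m (n + 1) = b + (C n)⁻¹ *ᵥ m n) (n : ℕ) :
    (C n)⁻¹ *ᵥ m n = (n : ℝ) • b + (C 0)⁻¹ *ᵥ m 0 :=
  Nat.cast_smul_eq_nsmul ℝ n b ▸ eq_nsmul_add_of_forall_succ (a := fun n => (C n)⁻¹ *ᵥ m n) hm n

end KalmanIteration

section Whitening

variable [DecidableEq ι] {R C₀ A M : Matrix ι ι ℝ}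
  (hR : IsUnit R.det) (hRR : R * R = C₀)
include hR hRR

lemma mul_inv_eq_inv_of_mul_self_eq : R * C₀⁻¹ = R⁻¹ := by
  rw [← hRR, Matrix.mul_inv_rev, ← Matrix.mul_assoc, mul_nonsing_inv _ hR, Matrix.one_mul]

variable {t : ℝ} (hM : M⁻¹ = t • A + C₀⁻¹)
include hM

lemma mul_inv_mul_eq_one_add_smul : R * M⁻¹ * R = 1 + t • (R * A * R) := by
  rw [hM, Matrix.mul_add, Matrix.add_mul, mul_inv_eq_inv_of_mul_self_eq hR hRR,
    nonsing_inv_mul _ hR, mul_smul_comm, smul_mul_assoc, add_comm]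

lemma one_add_smul_mulVec_inv_mulVec {b x x₀ : ι → ℝ} (hx : M⁻¹ *ᵥ x = t • b + C₀⁻¹ *ᵥ x₀) :
    (1 + t • (R * A * R)) *ᵥ (R⁻¹ *ᵥ x) = t • (R *ᵥ b) + R⁻¹ *ᵥ x₀ := by
  rw [← mul_inv_mul_eq_one_add_smul hR hRR hM, mulVec_mulVec, Matrix.mul_assoc,
    mul_nonsing_inv _ hR, Matrix.mul_one, ← mulVec_mulVec, hx, mulVec_add, mulVec_smul,
    mulVec_mulVec, mul_inv_eq_inv_of_mul_self_eq hR hRR]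

end Whitening

end Matrix

theorem kalman_unregularized_asymptotics_general
    {Nθ Ny : ℕ}
    (G : Matrix (Fin Ny) (Fin Nθ) ℝ)
    (y : EuclideanSpace ℝ (Fin Ny))
    (Sν : Matrix (Fin Ny) (Fin Ny) ℝ) (hSν : Sν.PosDef)
    (C : ℕ → Matrix (Fin Nθ) (Fin Nθ) ℝ) (hC0 : (C 0).PosDef)
    (hCrec : ∀ n, C (n + 1) = (Gᵀ * Sν⁻¹ * G + (C n)⁻¹)⁻¹)
    (m : ℕ → EuclideanSpace ℝ (Fin Nθ))
    (hmrec : ∀ n, (C (n + 1))⁻¹ *ᵥ m (n + 1) = (Gᵀ * Sν⁻¹) *ᵥ y + (C n)⁻¹ *ᵥ m n)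
    (G' : Matrix (Fin Ny) (Fin Nθ) ℝ) (hG' : G' = G * hC0.posSemidef.sqrt)
    (S : Matrix (Fin Nθ) (Fin Nθ) ℝ) (hS : S = G'ᵀ * Sν⁻¹ * G')
    (m' : ℕ → EuclideanSpace ℝ (Fin Nθ))
    (hm' : ∀ n, m' n = hC0.posSemidef.sqrt⁻¹ *ᵥ m n)
    (C' : ℕ → Matrix (Fin Nθ) (Fin Nθ) ℝ)
    (hC' : ∀ n, C' n = hC0.posSemidef.sqrt⁻¹ * C n * hC0.posSemidef.sqrt⁻¹)
    (Q : Matrix (Fin Nθ) (Fin Nθ) ℝ) (hQsymm : Qᵀ = Q) (hQidem : Q * Q = Q)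
    (hQrange : ∀ v : EuclideanSpace ℝ (Fin Nθ), S *ᵥ v = 0 ↔ Q *ᵥ v = v) :
    (∀ n, Q *ᵥ m' n = Q *ᵥ m' 0) ∧
    (∃ mstar : EuclideanSpace ℝ (Fin Nθ),
      (Q *ᵥ mstar = 0 ∧ S *ᵥ mstar = (G'ᵀ * Sν⁻¹) *ᵥ y) ∧
      (∀ m₂ : EuclideanSpace ℝ (Fin Nθ),
        Q *ᵥ m₂ = 0 ∧ S *ᵥ m₂ = (G'ᵀ * Sν⁻¹) *ᵥ y → m₂ = mstar) ∧
      (∃ K > (0 : ℝ), ∀ n : ℕ, 1 ≤ n →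
        ‖(show EuclideanSpace ℝ (Fin Nθ) from WithLp.toLp 2 (((1 : Matrix (Fin Nθ) (Fin Nθ) ℝ) - Q) *ᵥ m' n))
          - mstar‖ ≤ K / n)) ∧
    (∀ n : ℕ, (C' n)⁻¹ = 1 + (n : ℝ) • S ∧ Q * (C' n)⁻¹ = Q) := by
  set R := hC0.posSemidef.sqrt
  have hR : IsUnit R.det := hC0.isUnit_det_sqrt
  have hRR : R * R = C 0 := hC0.posSemidef.sqrt_mul_self
  have hG't : G'ᵀ = R * Gᵀ := by rw [hG', transpose_mul, hC0.posSemidef.transpose_sqrt]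
  have hSRAR : S = R * (Gᵀ * Sν⁻¹ * G) * R := by
    rw [hS, hG't, hG']
    simp only [Matrix.mul_assoc]
  have hCinv := inv_eq_smul_add_inv_zero (hSν.inv.posSemidef.transpose_mul_mul_same G) hC0 hCrec
  have hC'inv (n : ℕ) : (C' n)⁻¹ = 1 + (n : ℝ) • S := by
    rw [hC' n, Matrix.mul_inv_rev, Matrix.mul_inv_rev, nonsing_inv_nonsing_inv _ hR,
      ← Matrix.mul_assoc, mul_inv_mul_eq_one_add_smul hR hRR (hCinv n), hSRAR]
  have hm'rec (n : ℕ) :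
      (1 + (n : ℝ) • S) *ᵥ m' n = (n : ℝ) • ((G'ᵀ * Sν⁻¹) *ᵥ y) + (m' 0).ofLp := by
    rw [hm' n, hm' 0, hSRAR, one_add_smul_mulVec_inv_mulVec hR hRR (hCinv n)
      (inv_mulVec_eq_smul_add_inv_zero_mulVec (m := fun n => (m n).ofLp) hmrec n),
      mulVec_mulVec, hG't, Matrix.mul_assoc]
  have hSpsd : S.PosSemidef := hS ▸ hSν.inv.posSemidef.transpose_mul_mul_same G'
  have hker (v : Fin Nθ → ℝ) : S *ᵥ v = 0 ↔ Q *ᵥ v = v := hQrange (WithLp.toLp 2 v)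
  have hQS := mul_eq_zero_of_ker_iff' hker hSpsd.1 hQsymm hQidem
  have hQc : Q *ᵥ ((G'ᵀ * Sν⁻¹) *ᵥ y) = 0 := by
    rw [mulVec_mulVec, ← Matrix.mul_assoc,
      mul_transpose_eq_zero_of_ker_iff hker hSν.inv hS hQsymm hQidem, Matrix.zero_mul, zero_mulVec]
  obtain ⟨mstar, hQstar, hSstar⟩ := exists_mulVec_eq_of_ker_iff hker hSpsd.1 hQsymm hQidem hQc
  refine ⟨mulVec_eq_of_one_add_smul_mulVec_eq hQS hQc hm'rec,
    ⟨WithLp.toLp 2 mstar, ⟨hQstar, hSstar⟩, fun m₂ hm₂ => ?_,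
      exists_norm_sub_le_div_of_one_add_smul_mulVec_eq hker hSpsd hQsymm hQidem hQc hm'rec
        hQstar hSstar⟩,
    fun n => ⟨hC'inv n, by rw [hC'inv n, Matrix.mul_add, Matrix.mul_one, mul_smul_comm, hQS,
      smul_zero, add_zero]⟩⟩
  exact congrArg (WithLp.toLp 2)
    (eq_of_mulVec_eq_of_ker_iff hker hm₂.1 hQstar (hm₂.2.trans hSstar.symm))

/-- For the unregularized Kalman iteration (`α = 1`, `Sω = 0`) with
positive definite `C 0`, setting `G' = G C₀^{1/2}`, `S = G'ᵀ Sν⁻¹ G'`,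
`m' n = C₀^{-1/2} m n`, with `Q` the orthogonal projection onto the nullspace of `S`
and `P = I − Q`: (i) `Q m' n = Q m' 0` for all `n`; (ii) there is a unique `mstar`
orthogonal to the nullspace of `S` with `S mstar = G'ᵀ Sν⁻¹ y`, and a `K > 0` with
`‖P m' n − mstar‖ ≤ K / n` for `n ≥ 1`; (iii) `(C' n)⁻¹ = I + n S` where
`C' n = C₀^{-1/2} C n C₀^{-1/2}`, so in particular `Q (C' n)⁻¹ = Q`. -/
theorem kalman_unregularized_asymptotics
    {Nθ Ny : ℕ} (hNθ : 0 < Nθ) (hNy : 0 < Ny)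
    (G : Matrix (Fin Ny) (Fin Nθ) ℝ)
    (y : EuclideanSpace ℝ (Fin Ny))
    (Sν : Matrix (Fin Ny) (Fin Ny) ℝ) (hSν : Sν.PosDef)
    (C : ℕ → Matrix (Fin Nθ) (Fin Nθ) ℝ) (hC0 : (C 0).PosDef)
    (hCrec : ∀ n, C (n + 1) = (Gᵀ * Sν⁻¹ * G + (C n)⁻¹)⁻¹)
    (m : ℕ → EuclideanSpace ℝ (Fin Nθ))
    (hmrec : ∀ n, (C (n + 1))⁻¹ *ᵥ m (n + 1) = (Gᵀ * Sν⁻¹) *ᵥ y + (C n)⁻¹ *ᵥ m n)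
    (G' : Matrix (Fin Ny) (Fin Nθ) ℝ) (hG' : G' = G * hC0.posSemidef.sqrt)
    (S : Matrix (Fin Nθ) (Fin Nθ) ℝ) (hS : S = G'ᵀ * Sν⁻¹ * G')
    (m' : ℕ → EuclideanSpace ℝ (Fin Nθ))
    (hm' : ∀ n, m' n = hC0.posSemidef.sqrt⁻¹ *ᵥ m n)
    (C' : ℕ → Matrix (Fin Nθ) (Fin Nθ) ℝ)
    (hC' : ∀ n, C' n = hC0.posSemidef.sqrt⁻¹ * C n * hC0.posSemidef.sqrt⁻¹)
    (Q : Matrix (Fin Nθ) (Fin Nθ) ℝ) (hQsymm : Qᵀ = Q) (hQidem : Q * Q = Q)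
    (hQrange : ∀ v : EuclideanSpace ℝ (Fin Nθ), S *ᵥ v = 0 ↔ Q *ᵥ v = v) :
    (∀ n, Q *ᵥ m' n = Q *ᵥ m' 0) ∧
    (∃ mstar : EuclideanSpace ℝ (Fin Nθ),
      (Q *ᵥ mstar = 0 ∧ S *ᵥ mstar = (G'ᵀ * Sν⁻¹) *ᵥ y) ∧
      (∀ m₂ : EuclideanSpace ℝ (Fin Nθ),
        Q *ᵥ m₂ = 0 ∧ S *ᵥ m₂ = (G'ᵀ * Sν⁻¹) *ᵥ y → m₂ = mstar) ∧
      (∃ K > (0 : ℝ), ∀ n : ℕ, 1 ≤ n →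
        ‖(show EuclideanSpace ℝ (Fin Nθ) from WithLp.toLp 2 (((1 : Matrix (Fin Nθ) (Fin Nθ) ℝ) - Q) *ᵥ m' n))
          - mstar‖ ≤ K / n)) ∧
    (∀ n : ℕ, (C' n)⁻¹ = 1 + (n : ℝ) • S ∧ Q * (C' n)⁻¹ = Q) :=
  kalman_unregularized_asymptotics_general G y Sν hSν C hC0 hCrec m hmrec G' hG' S hS m' hm' C' hC'
    Q hQsymm hQidem hQrange
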